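/- For each n ≥ 0, the subspace A_n is invariant under R and S, and the only subspaces of A_n invariant under both R and S are 0 and A_n. (Irreducibility of the multiplicity spaces of the scaling ℂ*-action on the cone under the invariant derivations, Proposition 5.3, part 1.) -/

import Mathlib

/-- The ring `ℂ[u, t, t⁻¹]` of polynomials in `u` that are Laurent polynomials
in `t`, realized as the monoid algebra of `ℕ × ℤ` over `ℂ`. -/
abbrev PolyLaurent : Type := AddMonoidAlgebra ℂ (ℕ × ℤ)

/-- The monomial `uⁿ tᵐ` in `ℂ[u, t, t⁻¹]`. -/
noncomputable def mono (n : ℕ) (m : ℤ) : PolyLaurent :=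
  AddMonoidAlgebra.single (n, m) 1

/-- The partial derivative `∂_u` of `ℂ[u, t, t⁻¹]`, sending `uⁿtᵐ` to
`n·u^{n−1}tᵐ`. -/
noncomputable def du : PolyLaurent →ₗ[ℂ] PolyLaurent :=
  (AddMonoidAlgebra.coeffLinearEquiv ℂ).symm.toLinearMap ∘ₗ
    Finsupp.lsum ℂ (fun (p : ℕ × ℤ) => (p.1 : ℂ) • Finsupp.lsingle (p.1 - 1, p.2)) ∘ₗ
    (AddMonoidAlgebra.coeffLinearEquiv ℂ).toLinearMap

/-- The partial derivative `∂_t` of `ℂ[u, t, t⁻¹]`, sending `uⁿtᵐ` to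
`m·uⁿt^{m−1}`. -/
noncomputable def dt : PolyLaurent →ₗ[ℂ] PolyLaurent :=
  (AddMonoidAlgebra.coeffLinearEquiv ℂ).symm.toLinearMap ∘ₗ
    Finsupp.lsum ℂ (fun (p : ℕ × ℤ) => (p.2 : ℂ) • Finsupp.lsingle (p.1, p.2 - 1)) ∘ₗ
    (AddMonoidAlgebra.coeffLinearEquiv ℂ).toLinearMap

/-- The derivation `R := u·t·∂_u − t²·∂_t`, acting by
`R(uⁿtᵐ) = (n − m)·uⁿt^{m+1}`. -/
noncomputable def Rop : PolyLaurent →ₗ[ℂ] PolyLaurent :=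
  (LinearMap.mulLeft ℂ (mono 1 1)) ∘ₗ du - (LinearMap.mulLeft ℂ (mono 0 2)) ∘ₗ dt

/-- The derivation `S := u·t⁻¹·∂_u + ∂_t`, acting by
`S(uⁿtᵐ) = (n + m)·uⁿt^{m−1}`. -/
noncomputable def Sop : PolyLaurent →ₗ[ℂ] PolyLaurent :=
  (LinearMap.mulLeft ℂ (mono 1 (-1))) ∘ₗ du + dt

/-- `A_n`: the span of the monomials `uⁿtᵐ` with `−n ≤ m ≤ n`, i.e. the
weight-`n` space of the `ℂ*`-action scaling `u` on the coordinate ring of the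
cone. -/
noncomputable def coneAn (n : ℕ) : Submodule ℂ PolyLaurent :=
  Submodule.span ℂ {x : PolyLaurent | ∃ m : ℤ, -(n : ℤ) ≤ m ∧ m ≤ n ∧ x = mono n m}

/-! In the basis `eⱼ = uⁿt^{j-n}` (`0 ≤ j ≤ 2n`) of `A_n` one has `S eⱼ = j • eⱼ₋₁` and
`R eⱼ = (2n - j) • eⱼ₊₁`, as in the standard `(2n+1)`-dimensional `sl₂`-module. If `x ≠ 0` has
its top nonzero coefficient at `e_k`, then `S^k x` is a nonzero multiple of `e₀`, because `S^k`
kills every `eⱼ` with `j < k`. Starting from `e₀`, repeated application of `R` reaches every `eⱼ`,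
since `2n - j ≠ 0` for `j < 2n`. -/

lemma mono_mul (a c : ℕ) (b d : ℤ) : mono a b * mono c d = mono (a + c) (b + d) := by
  simp [mono, AddMonoidAlgebra.single_mul_single]

lemma du_mono (n : ℕ) (m : ℤ) : du (mono n m) = (n : ℂ) • mono (n - 1) m := by
  simp [du, mono, AddMonoidAlgebra.coeffLinearEquiv]

lemma dt_mono (n : ℕ) (m : ℤ) : dt (mono n m) = (m : ℂ) • mono n (m - 1) := by
  simp [dt, mono, AddMonoidAlgebra.coeffLinearEquiv]

-- At `n = 0` the truncated `n - 1` is harmless: the coefficient vanishes.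
lemma natCast_smul_mono_pred (n : ℕ) (m : ℤ) :
    (n : ℂ) • mono (1 + (n - 1)) m = (n : ℂ) • mono n m := by
  rcases n with _ | n <;> simp [add_comm]

lemma Rop_mono (n : ℕ) (m : ℤ) : Rop (mono n m) = ((n : ℂ) - m) • mono n (m + 1) := by
  simp only [Rop, LinearMap.sub_apply, LinearMap.comp_apply, du_mono, dt_mono, map_smul,
    LinearMap.mulLeft_apply, mono_mul, natCast_smul_mono_pred]
  rw [sub_smul, add_comm 1 m, show (2 : ℤ) + (m - 1) = m + 1 by ring, zero_add]

lemma Sop_mono (n : ℕ) (m : ℤ) : Sop (mono n m) = ((n : ℂ) + m) • mono n (m - 1) := by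
  simp only [Sop, LinearMap.add_apply, LinearMap.comp_apply, du_mono, dt_mono, map_smul,
    LinearMap.mulLeft_apply, mono_mul, natCast_smul_mono_pred]
  rw [add_smul, neg_add_eq_sub]

noncomputable def coneBasis (n j : ℕ) : PolyLaurent := mono n ((j : ℤ) - n)

lemma Rop_coneBasis (n j : ℕ) :
    Rop (coneBasis n j) = (2 * (n : ℂ) - j) • coneBasis n (j + 1) := by
  rw [coneBasis, Rop_mono, coneBasis]
  push_cast
  ring_nf

lemma Sop_coneBasis (n j : ℕ) : Sop (coneBasis n j) = (j : ℂ) • coneBasis n (j - 1) := by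
  rw [coneBasis, Sop_mono, coneBasis]
  rcases j with _ | j
  · simp
  · push_cast
    ring_nf

lemma Sop_pow_coneBasis (n j k : ℕ) :
    (Sop ^ k) (coneBasis n j) = (j.descFactorial k : ℂ) • coneBasis n (j - k) := by
  induction k generalizing j with
  | zero => simp
  | succ k ih =>
    rw [pow_succ, Module.End.mul_apply, Sop_coneBasis, map_smul, ih, smul_smul, Nat.sub_sub]
    rcases j with _ | j
    · simp
    · rw [Nat.succ_descFactorial_succ, Nat.cast_mul, Nat.add_sub_cancel, add_comm 1 k,
        Nat.add_sub_add_right]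

lemma coneAn_eq_span_coneBasis (n : ℕ) :
    coneAn n = Submodule.span ℂ (Set.range fun j : Fin (2 * n + 1) => coneBasis n j) := by
  rw [coneAn]
  congr 1
  ext x
  constructor
  · rintro ⟨m, hlo, hhi, rfl⟩
    refine ⟨⟨(m + n).toNat, by omega⟩, ?_⟩
    simp only [coneBasis, mono]
    congr 2
    omega
  · rintro ⟨j, rfl⟩
    exact ⟨j - n, by omega, by omega, rfl⟩

lemma coneBasis_mem_coneAn {n j : ℕ} (hj : j ≤ 2 * n) : coneBasis n j ∈ coneAn n := by
  rw [coneAn_eq_span_coneBasis]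
  exact Submodule.subset_span ⟨⟨j, by omega⟩, rfl⟩

lemma coneAn_le_comap_Rop (n : ℕ) : coneAn n ≤ (coneAn n).comap Rop := by
  conv_lhs => rw [coneAn_eq_span_coneBasis]
  rw [Submodule.span_le, Set.range_subset_iff]
  rintro ⟨j, hj⟩
  rw [SetLike.mem_coe, Submodule.mem_comap, Rop_coneBasis]
  rcases (Nat.lt_succ_iff.mp hj).lt_or_eq with hlt | rfl
  · exact Submodule.smul_mem _ _ (coneBasis_mem_coneAn hlt)
  · simp

lemma coneAn_le_comap_Sop (n : ℕ) : coneAn n ≤ (coneAn n).comap Sop := by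
  conv_lhs => rw [coneAn_eq_span_coneBasis]
  rw [Submodule.span_le, Set.range_subset_iff]
  rintro ⟨j, hj⟩
  rw [SetLike.mem_coe, Submodule.mem_comap, Sop_coneBasis]
  exact Submodule.smul_mem _ _ (coneBasis_mem_coneAn (by omega))

lemma exists_Sop_pow_eq_smul_coneBasis_zero {n : ℕ} {x : PolyLaurent} (hx : x ∈ coneAn n)
    (hx0 : x ≠ 0) : ∃ (k : ℕ) (c : ℂ), c ≠ 0 ∧ (Sop ^ k) x = c • coneBasis n 0 := by
  rw [coneAn_eq_span_coneBasis, Submodule.mem_span_range_iff_exists_fun] at hx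
  obtain ⟨c, rfl⟩ := hx
  have hsupp : (Finset.univ.filter fun j => c j ≠ 0).Nonempty := by
    contrapose! hx0
    refine Finset.sum_eq_zero fun j _ => ?_
    simp_all
  set top := (Finset.univ.filter fun j => c j ≠ 0).max' hsupp
  have hctop : c top ≠ 0 := (Finset.mem_filter.mp (Finset.max'_mem _ hsupp)).2
  have hc_gt : ∀ j, top < j → c j = 0 := fun j hj => by
    by_contra h
    exact hj.not_ge (Finset.le_max' _ j (Finset.mem_filter.mpr ⟨Finset.mem_univ j, h⟩))
  have hfact : ((top : ℕ).factorial : ℂ) ≠ 0 := Nat.cast_ne_zero.mpr (Nat.factorial_ne_zero _)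
  refine ⟨top, c top * (top : ℕ).factorial, mul_ne_zero hctop hfact, ?_⟩
  simp only [map_sum, map_smul, Sop_pow_coneBasis, smul_smul]
  rw [Finset.sum_eq_single top, Nat.descFactorial_self, Nat.sub_self]
  · intro j _ hj
    rcases hj.lt_or_gt with hlt | hgt
    · rw [Nat.descFactorial_eq_zero_iff_lt.mpr hlt]
      simp
    · simp [hc_gt j hgt]
  · simp

lemma coneAn_le_of_coneBasis_zero_mem {n : ℕ} {p : Submodule ℂ PolyLaurent}
    (hR : ∀ x ∈ p, Rop x ∈ p) (h0 : coneBasis n 0 ∈ p) : coneAn n ≤ p := by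
  have hmem : ∀ j ≤ 2 * n, coneBasis n j ∈ p := by
    intro j
    induction j with
    | zero => exact fun _ => h0
    | succ j ih =>
      intro hj
      have hcoef : 2 * (n : ℂ) - j ≠ 0 :=
        sub_ne_zero.mpr (by exact_mod_cast (by omega : 2 * n ≠ j))
      rw [← p.smul_mem_iff hcoef, ← Rop_coneBasis]
      exact hR _ (ih (by omega))
  rw [coneAn_eq_span_coneBasis, Submodule.span_le, Set.range_subset_iff]
  exact fun j => hmem j (by omega)

theorem cone_scaling_multiplicity_spaces_irreducible (n : ℕ) :
    (∀ x ∈ coneAn n, Rop x ∈ coneAn n ∧ Sop x ∈ coneAn n) ∧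
    (∀ p : Submodule ℂ PolyLaurent, p ≤ coneAn n →
      (∀ x ∈ p, Rop x ∈ p ∧ Sop x ∈ p) → p = ⊥ ∨ p = coneAn n) := by
  refine ⟨fun x hx => ⟨coneAn_le_comap_Rop n hx, coneAn_le_comap_Sop n hx⟩,
    fun p hle hinv => or_iff_not_imp_left.mpr fun hp => le_antisymm hle ?_⟩
  obtain ⟨x, hxp, hx0⟩ := (Submodule.ne_bot_iff p).mp hp
  obtain ⟨k, c, hc, hSk⟩ := exists_Sop_pow_eq_smul_coneBasis_zero (hle hxp) hx0
  have h0 : coneBasis n 0 ∈ p := by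
    rw [← p.smul_mem_iff hc, ← hSk]
    exact Module.End.pow_apply_mem_of_forall_mem k (fun y hy => (hinv y hy).2) x hxp
  exact coneAn_le_of_coneBasis_zero_mem (fun y hy => (hinv y hy).1) h0
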